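/- arXiv:2310.12375 — 4 statements merged into one kernel-verified Lean document; each statement's English description precedes it below -/
import Mathlib

section
/- Let d ≥ 1, k ≥ 1, r ≥ 2 be integers, ε ∈ (0,1), and s ∈ ℕ, and suppose there exists at least one function {0,1}^d → [r] that is ε-far from k-monotone. Let T be a randomized sample-based tester with s samples that has one-sided error, i.e., T accepts every k-monotone f : {0,1}^d → [r] with probability exactly 1, and T rejects every f : {0,1}^d → [r] that is ε-far from k-monotone with probability at least 2/3. Then s² ≥ (2/3)·(4/3)^d. -/
open Finset

abbrev Cube (d : ℕ) := Fin d → Bool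

def AltChain {X : Type*} [Preorder X] (f : X → ℝ) {m : ℕ} (x : Fin m → X) : Prop :=
  StrictMono x ∧ ∀ i : Fin m, ∀ h : (i : ℕ) + 1 < m,
    (Even (i : ℕ) → f (x ⟨(i : ℕ) + 1, h⟩) < f (x i)) ∧
    (Odd (i : ℕ) → f (x i) < f (x ⟨(i : ℕ) + 1, h⟩))

def KMonotone {X : Type*} [Preorder X] (k : ℕ) (f : X → ℝ) : Prop :=
  ¬ ∃ x : Fin (k + 1) → X, AltChain f x

noncomputable def cubeDist {d r : ℕ} (f g : Cube d → Fin r) : ℝ :=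
  ((Finset.univ.filter fun x => f x ≠ g x).card : ℝ) / 2 ^ d

def EpsFar {d r : ℕ} (k : ℕ) (ε : ℝ) (f : Cube d → Fin r) : Prop :=
  ∀ g : Cube d → Fin r, KMonotone k (fun x => ((g x : ℕ) : ℝ)) → ε ≤ cubeDist f g

noncomputable def accProb {d r s : ℕ} (T : (Fin s → Cube d × Fin r) → ℝ)
    (f : Cube d → Fin r) : ℝ :=
  (∑ x : Fin s → Cube d, T fun i => (x i, f (x i))) / ((2 : ℝ) ^ d) ^ s

/-! ### Auxiliary lemmas -/

/-- Split a tuple into its values at two distinct indices (as a comparable pair)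
and the rest, assuming the pair condition holds. -/
def splitEquiv {γ : Type*} [Preorder γ] {s : ℕ} (i j : Fin s) (hij : i ≠ j) :
    {x : Fin s → γ // x i ≤ x j} ≃
      {p : γ × γ // p.1 ≤ p.2} × ({t : Fin s // t ≠ i ∧ t ≠ j} → γ) where
  toFun x := (⟨(x.1 i, x.1 j), x.2⟩, fun t => x.1 t.1)
  invFun q := ⟨fun t => if h : t = i then q.1.1.1 else if h' : t = j then q.1.1.2
      else q.2 ⟨t, h, h'⟩,
    by
      dsimp only
      rw [dif_pos rfl, dif_neg (Ne.symm hij), dif_pos rfl]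
      exact q.1.2⟩
  left_inv := by
    rintro ⟨x, hx⟩
    apply Subtype.ext; funext t
    by_cases h : t = i
    · simp [h]
    · by_cases h' : t = j <;> simp [h, h', Ne.symm hij]
  right_inv := by
    rintro ⟨⟨⟨a, b⟩, hab⟩, y⟩
    refine Prod.ext ?_ ?_
    · apply Subtype.ext
      simp [Ne.symm hij]
    · funext t
      simp [t.2.1, t.2.2]

open scoped Classical in
def cubePairEquiv (d : ℕ) :
    {p : Cube d × Cube d // p.1 ≤ p.2} ≃ (Fin d → {q : Bool × Bool // q.1 ≤ q.2}) where
  toFun p t := ⟨(p.1.1 t, p.1.2 t), p.2 t⟩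
  invFun q := ⟨(fun t => (q t).1.1, fun t => (q t).1.2), fun t => (q t).2⟩
  left_inv p := rfl
  right_inv q := rfl

open scoped Classical in
lemma card_cubePair (d : ℕ) :
    Fintype.card {p : Cube d × Cube d // p.1 ≤ p.2} = 3 ^ d := by
  rw [Fintype.card_congr (cubePairEquiv d), Fintype.card_fun]
  have : Fintype.card {q : Bool × Bool // q.1 ≤ q.2} = 3 := by decide
  simp [this]

lemma card_ne_two {s : ℕ} (i j : Fin s) (hij : i ≠ j) :
    Fintype.card {t : Fin s // t ≠ i ∧ t ≠ j} = s - 2 := by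
  classical
  rw [Fintype.card_subtype]
  have : (univ.filter fun t : Fin s => t ≠ i ∧ t ≠ j) = univ \ {i, j} := by
    ext t; simp [not_or]
  rw [this, Finset.card_sdiff_of_subset (Finset.subset_univ _), Finset.card_pair hij]
  simp

lemma pairCount {d s : ℕ} (i j : Fin s) (hij : i ≠ j)
    [DecidablePred fun x : Fin s → Cube d => x i ≤ x j] :
    (univ.filter fun x : Fin s → Cube d => x i ≤ x j).card ≤ 3 ^ d * (2 ^ d) ^ (s - 2) := by
  classical
  rw [← Fintype.card_subtype]
  rw [Fintype.card_congr (splitEquiv i j hij), Fintype.card_prod, card_cubePair,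
    Fintype.card_fun, card_ne_two i j hij]
  have : Fintype.card (Cube d) = 2 ^ d := by
    simp [Fintype.card_fun]
  rw [this]

theorem stmt4 (d r k : ℕ) (hd : 1 ≤ d) (hr : 2 ≤ r) (hk : 1 ≤ k)
    (ε : ℝ) (hε : 0 < ε) (hε1 : ε < 1)
    (f₀ : Cube d → Fin r) (hf₀ : EpsFar k ε f₀)
    (s : ℕ) (T : (Fin s → Cube d × Fin r) → ℝ)
    (hT : ∀ σ, 0 ≤ T σ ∧ T σ ≤ 1)
    (hyes : ∀ f : Cube d → Fin r, KMonotone k (fun x => ((f x : ℕ) : ℝ)) → accProb T f = 1)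
    (hno : ∀ f : Cube d → Fin r, EpsFar k ε f → 2 / 3 ≤ 1 - accProb T f) :
    (2 : ℝ) / 3 * (4 / 3) ^ d ≤ (s : ℝ) ^ 2 := by
  classical
  have hDpos : (0:ℝ) < ((2:ℝ) ^ d) ^ s := by positivity
  have hcardCube : Fintype.card (Cube d) = 2 ^ d := by simp [Fintype.card_fun]
  have hcardTup : Fintype.card (Fin s → Cube d) = (2 ^ d) ^ s := by
    rw [Fintype.card_fun, hcardCube, Fintype.card_fin]
  have hsum1 : ∑ _x : Fin s → Cube d, (1 : ℝ) = ((2:ℝ) ^ d) ^ s := by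
    rw [Finset.sum_const, Finset.card_univ, hcardTup]
    push_cast
    ring
  -- key: good tuples are accepted with probability 1
  have key : ∀ x : Fin s → Cube d, (∀ i j : Fin s, i ≠ j → ¬ x i ≤ x j) →
      T (fun i => (x i, f₀ (x i))) = 1 := by
    intro x hx
    have hr0 : (0:ℕ) < r := by omega
    have hlt : ∀ y : Cube d,
        ((univ.filter fun i => x i ≤ y).sup fun i => ((f₀ (x i) : ℕ))) < r := by
      intro y
      refine (Finset.sup_lt_iff (by simpa using hr0)).mpr ?_
      intro i _
      exact (f₀ (x i)).is_lt
    set g : Cube d → Fin r := fun y => ⟨_, hlt y⟩ with hg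
    have hmono : Monotone g := by
      intro a b hab
      refine Fin.mk_le_mk.mpr (Finset.sup_mono ?_)
      intro i hi
      simp only [Finset.mem_filter, Finset.mem_univ, true_and] at hi ⊢
      exact le_trans hi hab
    have hgx : ∀ j, g (x j) = f₀ (x j) := by
      intro j
      have hfil : (univ.filter fun i => x i ≤ x j) = {j} := by
        ext i
        simp only [Finset.mem_filter, Finset.mem_univ, true_and, Finset.mem_singleton]
        constructor
        · intro h
          by_contra hne
          exact hx i j hne h
        · rintro rfl; exact le_refl _
      apply Fin.ext
      show ((univ.filter fun i => x i ≤ x j).sup fun i => ((f₀ (x i) : ℕ))) = _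
      rw [hfil, Finset.sup_singleton]
    have hkm : KMonotone k (fun y => ((g y : ℕ) : ℝ)) := by
      rintro ⟨c, hSM, hA⟩
      have h01 : ((⟨0, by omega⟩ : Fin (k+1)) : ℕ) + 1 < k + 1 := by
        simp only [Fin.val_mk]; omega
      have hlt' := (hA ⟨0, by omega⟩ h01).1 (by simp)
      have hcle : c ⟨0, by omega⟩ ≤ c ⟨(((⟨0, by omega⟩ : Fin (k+1)) : ℕ)) + 1, h01⟩ :=
        le_of_lt (hSM (Fin.mk_lt_mk.mpr (by simp)))
      have hle2 : ((g (c ⟨0, by omega⟩) : ℕ) : ℝ) ≤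
          ((g (c ⟨(((⟨0, by omega⟩ : Fin (k+1)) : ℕ)) + 1, h01⟩) : ℕ) : ℝ) :=
        Nat.cast_le.mpr (Fin.le_def.mp (hmono hcle))
      simp only at hlt'
      linarith
    have hacc := hyes g hkm
    have hsum : ∑ y : Fin s → Cube d, T (fun i => (y i, g (y i))) = ((2:ℝ) ^ d) ^ s := by
      have h := hacc
      unfold accProb at h
      exact (div_eq_one_iff_eq (ne_of_gt hDpos)).mp h
    have hone : ∀ y : Fin s → Cube d, T (fun i => (y i, g (y i))) = 1 := by
      have heq : ∑ y : Fin s → Cube d, T (fun i => (y i, g (y i)))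
          = ∑ _y : Fin s → Cube d, (1:ℝ) := by rw [hsum, hsum1]
      intro y
      exact (Finset.sum_eq_sum_iff_of_le (fun y _ => (hT _).2)).mp heq y (Finset.mem_univ y)
    have harg : (fun i => (x i, f₀ (x i))) = fun i => (x i, g (x i)) := by
      funext i
      rw [hgx]
    rw [harg]
    exact hone x
  -- the bad set
  set Bad : Finset (Fin s → Cube d) :=
    univ.filter (fun x => ∃ i j : Fin s, i ≠ j ∧ x i ≤ x j) with hBad
  have hrej := hno f₀ hf₀
  have haccf : accProb T f₀ =
      (∑ x : Fin s → Cube d, T (fun i => (x i, f₀ (x i)))) / ((2:ℝ) ^ d) ^ s := rfl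
  have h1 : (2:ℝ)/3 * ((2:ℝ) ^ d) ^ s ≤
      ∑ x : Fin s → Cube d, (1 - T (fun i => (x i, f₀ (x i)))) := by
    rw [Finset.sum_sub_distrib, hsum1]
    rw [haccf] at hrej
    have h := mul_le_mul_of_nonneg_right hrej hDpos.le
    calc (2:ℝ)/3 * ((2:ℝ) ^ d) ^ s
        ≤ (1 - (∑ x : Fin s → Cube d, T (fun i => (x i, f₀ (x i)))) / ((2:ℝ) ^ d) ^ s)
            * ((2:ℝ) ^ d) ^ s := h
      _ = ((2:ℝ) ^ d) ^ s - ∑ x : Fin s → Cube d, T (fun i => (x i, f₀ (x i))) := by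
          field_simp
  have h2 : ∑ x : Fin s → Cube d, (1 - T (fun i => (x i, f₀ (x i)))) ≤ (Bad.card : ℝ) := by
    have hzero : ∀ x ∈ (univ : Finset (Fin s → Cube d)), x ∉ Bad →
        (1 - T (fun i => (x i, f₀ (x i)))) = 0 := by
      intro x _ hxB
      have hgood : ∀ i j : Fin s, i ≠ j → ¬ x i ≤ x j := by
        intro i j hij hle
        refine hxB ?_
        rw [hBad, Finset.mem_filter]
        exact ⟨Finset.mem_univ x, i, j, hij, hle⟩
      rw [key x hgood]
      ring
    rw [← Finset.sum_subset (Finset.subset_univ Bad) hzero]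
    calc ∑ x ∈ Bad, (1 - T (fun i => (x i, f₀ (x i)))) ≤ Bad.card • (1:ℝ) :=
        Finset.sum_le_card_nsmul _ _ 1 (fun x _ => by linarith [(hT (fun i => (x i, f₀ (x i)))).1])
      _ = (Bad.card : ℝ) := by simp
  have hs2 : 2 ≤ s := by
    by_contra hs
    push_neg at hs
    have hBadEmpty : Bad = ∅ := by
      rw [hBad, Finset.filter_eq_empty_iff]
      rintro x - ⟨i, j, hij, -⟩
      exact hij (Fin.ext (by omega))
    rw [hBadEmpty] at h2
    have h0 : (2:ℝ)/3 * ((2:ℝ) ^ d) ^ s ≤ 0 := by simpa using le_trans h1 h2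
    nlinarith [hDpos]
  have h3 : Bad.card ≤ s ^ 2 * (3 ^ d * (2 ^ d) ^ (s - 2)) := by
    have hsub : Bad ⊆ (univ : Finset (Fin s)).offDiag.biUnion
        (fun p => univ.filter fun x : Fin s → Cube d => x p.1 ≤ x p.2) := by
      intro x hxB
      rw [hBad, Finset.mem_filter] at hxB
      obtain ⟨-, i, j, hij, hle⟩ := hxB
      exact Finset.mem_biUnion.mpr ⟨(i, j), by simp [Finset.mem_offDiag, hij],
        by simp [hle]⟩
    calc Bad.card ≤ _ := Finset.card_le_card hsub
      _ ≤ ∑ p ∈ (univ : Finset (Fin s)).offDiag,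
            (univ.filter fun x : Fin s → Cube d => x p.1 ≤ x p.2).card :=
          Finset.card_biUnion_le
      _ ≤ (univ : Finset (Fin s)).offDiag.card • (3 ^ d * (2 ^ d) ^ (s - 2)) := by
          refine Finset.sum_le_card_nsmul _ _ _ ?_
          intro p hp
          exact pairCount p.1 p.2 (Finset.mem_offDiag.mp hp).2.2
      _ ≤ s ^ 2 * (3 ^ d * (2 ^ d) ^ (s - 2)) := by
          rw [smul_eq_mul]
          apply Nat.mul_le_mul_right
          rw [Finset.offDiag_card, Finset.card_univ, Fintype.card_fin]
          exact (Nat.sub_le _ _).trans (le_of_eq (pow_two s).symm)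
  obtain ⟨m, rfl⟩ : ∃ m, s = m + 2 := ⟨s - 2, by omega⟩
  have h4 : (Bad.card : ℝ) ≤ (↑(m + 2) : ℝ) ^ 2 * (3 ^ d * ((2:ℝ) ^ d) ^ m) := by
    have := (Nat.cast_le (α := ℝ)).mpr h3
    calc (Bad.card : ℝ) ≤ ((m + 2) ^ 2 * (3 ^ d * (2 ^ d) ^ (m + 2 - 2)) : ℕ) := this
      _ = (↑(m + 2) : ℝ) ^ 2 * (3 ^ d * ((2:ℝ) ^ d) ^ m) := by
          push_cast
          ring
  have hDsplit : ((2:ℝ) ^ d) ^ (m + 2) = (4:ℝ) ^ d * ((2:ℝ) ^ d) ^ m := by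
    rw [pow_add]
    have : ((2:ℝ) ^ d) ^ 2 = (4:ℝ) ^ d := by
      rw [← pow_mul, mul_comm, pow_mul]
      norm_num
    rw [this]
    ring
  have hP : (0:ℝ) < ((2:ℝ) ^ d) ^ m := by positivity
  have h3pos : (0:ℝ) < (3:ℝ) ^ d := by positivity
  have key2 : 2/3 * (4:ℝ) ^ d * ((2:ℝ) ^ d) ^ m ≤
      (↑(m + 2) : ℝ) ^ 2 * 3 ^ d * ((2:ℝ) ^ d) ^ m := by
    have := le_trans h1 (le_trans h2 h4)
    rw [hDsplit] at this
    nlinarith [this]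
  have key3 : 2/3 * (4:ℝ) ^ d ≤ (↑(m + 2) : ℝ) ^ 2 * 3 ^ d :=
    le_of_mul_le_mul_right key2 hP
  have hrw : (2:ℝ)/3 * (4/3) ^ d = (2/3 * 4 ^ d) / 3 ^ d := by
    rw [div_pow]
    ring
  rw [hrw, div_le_iff₀ h3pos]
  push_cast
  push_cast at key3
  linarith
end

section
/- Let X be a nonempty finite set, μ a probability distribution on X, and F a nonempty class of functions X → {−1,1}. Fix ε ∈ (0,1). Suppose there exist s ∈ ℕ and a map L : (X × {−1,1})^s → (X → {−1,1}) such that for every f ∈ F, with probability at least 5/6 over x_1,…,x_s drawn i.i.d. from μ, the hypothesis h = L((x_1,f(x_1)),…,(x_s,f(x_s))) satisfies d_μ(f,h) ≤ ε/4. Then there exists a randomized sample-based tester T using s + ⌈20/ε²⌉ i.i.d. samples from μ (each labeled by the input function) such that: for every f ∈ F, T accepts with probability at least 2/3, and for every f : X → {−1,1} with d_μ(f,g) ≥ ε for all g ∈ F, T rejects with probability at least 2/3. -/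
open Finset

section Helpers

lemma sum_prod_fn {X : Type*} [Fintype X] {m : ℕ} (g : Fin m → X → ℝ) :
    ∑ b : Fin m → X, ∏ j, g j (b j) = ∏ j, ∑ z, g j z :=
  (Fintype.prod_sum g).symm

lemma total_mass {X : Type*} [Fintype X] (μ : X → ℝ) (hμ1 : ∑ z, μ z = 1) (m : ℕ) :
    ∑ b : Fin m → X, ∏ k, μ (b k) = 1 := by
  rw [sum_prod_fn (fun _ z => μ z)]
  simp [hμ1]

lemma cantelli {ι : Type*} [Fintype ι] (w Y : ι → ℝ) (E : ι → Prop) [DecidablePred E]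
    (hw : ∀ i, 0 ≤ w i) (hw1 : ∑ i, w i = 1)
    (hY0 : ∑ i, w i * Y i = 0) (a : ℝ) (ha : 0 < a)
    (hY2 : ∑ i, w i * Y i ^ 2 ≤ a ^ 2 / 5)
    (hE : ∀ i, E i → a ≤ Y i) :
    ∑ i, w i * (if E i then 1 else 0) ≤ 1 / 6 := by
  have hpt : ∀ i, w i * (if E i then (1:ℝ) else 0) ≤ w i * ((Y i + a/5)^2 / ((6*a/5)^2)) := by
    intro i
    apply mul_le_mul_of_nonneg_left _ (hw i)
    split_ifs with h
    · have h1 := hE i h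
      rw [le_div_iff₀ (by positivity)]
      nlinarith
    · positivity
  have expand : ∑ i, w i * (Y i + a/5)^2
      = (∑ i, w i * Y i ^ 2) + (2*a/5) * (∑ i, w i * Y i) + (a/5)^2 * (∑ i, w i) := by
    rw [Finset.mul_sum, Finset.mul_sum, ← Finset.sum_add_distrib, ← Finset.sum_add_distrib]
    exact Finset.sum_congr rfl fun i _ => by ring
  calc ∑ i, w i * (if E i then (1:ℝ) else 0)
      ≤ ∑ i, w i * ((Y i + a/5)^2 / ((6*a/5)^2)) := Finset.sum_le_sum fun i _ => hpt i
    _ = (∑ i, w i * (Y i + a/5)^2) / (6*a/5)^2 := by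
        rw [Finset.sum_div]; exact Finset.sum_congr rfl fun i _ => by ring
    _ ≤ 1/6 := by
        rw [div_le_iff₀ (by positivity), expand, hY0, hw1]
        nlinarith

lemma sum_prod_single {X : Type*} [Fintype X] (μ : X → ℝ) (hμ1 : ∑ z, μ z = 1)
    {m : ℕ} (j : Fin m) (c : X → ℝ) :
    ∑ b : Fin m → X, (∏ k, μ (b k)) * c (b j) = ∑ z, μ z * c z := by
  have h1 : ∀ b : Fin m → X, (∏ k, μ (b k)) * c (b j)
      = ∏ k, (μ (b k) * (if k = j then c (b k) else 1)) := by
    intro b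
    rw [Finset.prod_mul_distrib, Finset.prod_ite_eq' univ j (fun k => c (b k))]
    simp
  rw [Finset.sum_congr rfl fun b _ => h1 b,
    sum_prod_fn (fun k z => μ z * (if k = j then c z else 1))]
  have h2 : ∀ k : Fin m, (∑ z, μ z * (if k = j then c z else 1))
      = (if k = j then ∑ z, μ z * c z else 1) := by
    intro k
    split_ifs with h <;> simp [h, hμ1]
  rw [Finset.prod_congr rfl fun k _ => h2 k, Finset.prod_ite_eq' univ j
    (fun _ => ∑ z, μ z * c z)]
  simp

lemma sum_prod_pair {X : Type*} [Fintype X] (μ : X → ℝ) (hμ1 : ∑ z, μ z = 1)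
    {m : ℕ} {j k : Fin m} (hjk : j ≠ k) (c d : X → ℝ) :
    ∑ b : Fin m → X, (∏ i, μ (b i)) * (c (b j) * d (b k))
      = (∑ z, μ z * c z) * (∑ z, μ z * d z) := by
  have key : ∀ (i : Fin m) (x : X),
      (if i = j then c x else if i = k then d x else 1)
      = (if i = j then c x else 1) * (if i = k then d x else 1) := by
    intro i x
    rcases eq_or_ne i j with rfl | h1
    · simp [hjk]
    · rcases eq_or_ne i k with rfl | h2
      · simp [h1]
      · simp [h1, h2]
  have h1 : ∀ b : Fin m → X, (∏ i, μ (b i)) * (c (b j) * d (b k))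
      = ∏ i, (μ (b i) * (if i = j then c (b i) else if i = k then d (b i) else 1)) := by
    intro b
    rw [Finset.prod_mul_distrib]
    have : ∏ i, (if i = j then c (b i) else if i = k then d (b i) else 1)
        = (∏ i, (if i = j then c (b i) else 1)) * ∏ i, (if i = k then d (b i) else 1) := by
      rw [← Finset.prod_mul_distrib]
      exact Finset.prod_congr rfl fun i _ => key i (b i)
    rw [this, Finset.prod_ite_eq' univ j (fun i => c (b i)),
      Finset.prod_ite_eq' univ k (fun i => d (b i))]
    simp
  rw [Finset.sum_congr rfl fun b _ => h1 b,
    sum_prod_fn (fun i z => μ z * (if i = j then c z else if i = k then d z else 1))]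
  have h2 : ∀ i : Fin m, (∑ z, μ z * (if i = j then c z else if i = k then d z else 1))
      = (if i = j then ∑ z, μ z * c z else 1) * (if i = k then ∑ z, μ z * d z else 1) := by
    intro i
    rcases eq_or_ne i j with rfl | hij
    · simp [hjk]
    · rcases eq_or_ne i k with rfl | hik
      · simp [hij, hμ1]
      · simp [hij, hik, hμ1]
  rw [Finset.prod_congr rfl fun i _ => h2 i, Finset.prod_mul_distrib,
    Finset.prod_ite_eq' univ j (fun _ => ∑ z, μ z * c z),
    Finset.prod_ite_eq' univ k (fun _ => ∑ z, μ z * d z)]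
  simp

lemma first_moment {X : Type*} [Fintype X] (μ : X → ℝ) (hμ1 : ∑ z, μ z = 1)
    {m : ℕ} (ψ : X → ℝ) :
    ∑ b : Fin m → X, (∏ q, μ (b q)) * (∑ j, ψ (b j)) = m * ∑ z, μ z * ψ z := by
  have : ∀ b : Fin m → X, (∏ q, μ (b q)) * (∑ j, ψ (b j))
      = ∑ j, (∏ q, μ (b q)) * ψ (b j) := fun b => Finset.mul_sum _ _ _
  rw [Finset.sum_congr rfl fun b _ => this b, Finset.sum_comm]
  rw [Finset.sum_congr rfl fun j _ => sum_prod_single μ hμ1 j ψ]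
  simp [mul_comm]

lemma second_moment {X : Type*} [Fintype X] (μ : X → ℝ) (hμ1 : ∑ z, μ z = 1)
    {m : ℕ} (ψ : X → ℝ) (hψ0 : ∑ z, μ z * ψ z = 0) :
    ∑ b : Fin m → X, (∏ q, μ (b q)) * (∑ j, ψ (b j)) ^ 2
      = m * ∑ z, μ z * ψ z ^ 2 := by
  have expand : ∀ b : Fin m → X, (∏ q, μ (b q)) * (∑ j, ψ (b j)) ^ 2
      = ∑ j, ∑ k, (∏ q, μ (b q)) * (ψ (b j) * ψ (b k)) := by
    intro b
    rw [sq, Finset.sum_mul_sum]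
    rw [Finset.mul_sum]
    exact Finset.sum_congr rfl fun j _ => by rw [Finset.mul_sum]
  rw [Finset.sum_congr rfl fun b _ => expand b, Finset.sum_comm]
  have inner : ∀ j : Fin m,
      (∑ b : Fin m → X, ∑ k, (∏ q, μ (b q)) * (ψ (b j) * ψ (b k)))
      = ∑ z, μ z * ψ z ^ 2 := by
    intro j
    rw [Finset.sum_comm]
    have term : ∀ k : Fin m,
        (∑ b : Fin m → X, (∏ q, μ (b q)) * (ψ (b j) * ψ (b k)))
        = if k = j then ∑ z, μ z * ψ z ^ 2 else 0 := by
      intro k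
      rcases eq_or_ne k j with rfl | hkj
      · rw [if_pos rfl]
        have : ∀ b : Fin m → X, (∏ q, μ (b q)) * (ψ (b k) * ψ (b k))
            = (∏ q, μ (b q)) * (fun z => ψ z ^ 2) (b k) := by
          intro b; simp [sq]
        rw [Finset.sum_congr rfl fun b _ => this b, sum_prod_single μ hμ1 k (fun z => ψ z ^ 2)]
      · rw [if_neg hkj, sum_prod_pair μ hμ1 (Ne.symm hkj) ψ ψ, hψ0, mul_zero]
    rw [Finset.sum_congr rfl fun k _ => term k, Finset.sum_ite_eq' univ j
      (fun _ => ∑ z, μ z * ψ z ^ 2)]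
    simp
  rw [Finset.sum_congr rfl fun j _ => inner j]
  simp [mul_comm]

lemma tail_bound {X : Type*} [Fintype X] (μ : X → ℝ) (hμ0 : ∀ x, 0 ≤ μ x)
    (hμ1 : ∑ z, μ z = 1) {m : ℕ} (θ : X → ℝ) (hθ : ∀ z, θ z = 0 ∨ θ z = 1)
    (a : ℝ) (ha : 0 < a)
    (h5 : (m : ℝ) * ((∑ z, μ z * θ z) * (1 - ∑ z, μ z * θ z)) ≤ a ^ 2 / 5)
    (E : (Fin m → X) → Prop) [DecidablePred E] (sgn : ℝ) (hsgn : sgn = 1 ∨ sgn = -1)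
    (hE : ∀ b, E b → a ≤ sgn * ((∑ j, θ (b j)) - m * (∑ z, μ z * θ z))) :
    ∑ b : Fin m → X, (∏ k, μ (b k)) * (if E b then 1 else 0) ≤ 1 / 6 := by
  classical
  set p : ℝ := ∑ z, μ z * θ z with hp
  set ψ : X → ℝ := fun z => θ z - p with hψ
  have hψ0 : ∑ z, μ z * ψ z = 0 := by
    simp only [hψ, mul_sub, Finset.sum_sub_distrib, ← Finset.sum_mul, hμ1]
    ring
  have hψ2 : ∑ z, μ z * ψ z ^ 2 = p * (1 - p) := by
    have : ∀ z, μ z * ψ z ^ 2 = μ z * θ z * (1 - 2 * p) + μ z * p ^ 2 := by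
      intro z
      have hz : θ z ^ 2 = θ z := by rcases hθ z with h | h <;> simp [h]
      have h4 : (θ z - p) ^ 2 = θ z ^ 2 - 2 * p * θ z + p ^ 2 := by ring
      simp only [hψ, h4, hz]; ring
    rw [Finset.sum_congr rfl fun z _ => this z, Finset.sum_add_distrib,
      ← Finset.sum_mul, ← Finset.sum_mul, hμ1]
    ring
  have key := cantelli (fun b : Fin m → X => ∏ k, μ (b k))
    (fun b => sgn * ((∑ j, θ (b j)) - m * p)) E
    (fun b => Finset.prod_nonneg fun k _ => hμ0 _) (total_mass μ hμ1 m) ?_ a ha ?_ hE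
  · exact key
  · have := first_moment μ hμ1 (m := m) ψ
    rw [hψ0, mul_zero] at this
    have heq : ∀ b : Fin m → X,
        (∏ k, μ (b k)) * (sgn * ((∑ j, θ (b j)) - m * p))
        = sgn * ((∏ k, μ (b k)) * (∑ j, ψ (b j))) := by
      intro b
      simp only [hψ, Finset.sum_sub_distrib, Finset.sum_const, card_univ,
        Fintype.card_fin, nsmul_eq_mul]
      ring
    rw [Finset.sum_congr rfl fun b _ => heq b, ← Finset.mul_sum, this, mul_zero]
  · have h2 := second_moment μ hμ1 (m := m) ψ hψ0
    have heq : ∀ b : Fin m → X,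
        (∏ k, μ (b k)) * (sgn * ((∑ j, θ (b j)) - m * p)) ^ 2
        = (∏ k, μ (b k)) * (∑ j, ψ (b j)) ^ 2 := by
      intro b
      have hs2 : sgn ^ 2 = 1 := by rcases hsgn with h | h <;> simp [h]
      have : (∑ j, ψ (b j)) = (∑ j, θ (b j)) - m * p := by
        simp only [hψ, Finset.sum_sub_distrib, Finset.sum_const, card_univ,
          Fintype.card_fin, nsmul_eq_mul]
      rw [this, mul_pow, hs2, one_mul]
    rw [Finset.sum_congr rfl fun b _ => heq b, h2, hψ2]
    exact h5

variable {X : Type*} [Fintype X]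

lemma dist_nonneg' (μ : X → ℝ) (hμ0 : ∀ x, 0 ≤ μ x) (u v : X → ℝ) :
    0 ≤ ∑ z, μ z * (if u z ≠ v z then (1:ℝ) else 0) := by
  apply Finset.sum_nonneg
  intro z _
  apply mul_nonneg (hμ0 z)
  split_ifs <;> norm_num

lemma dist_le_one (μ : X → ℝ) (hμ0 : ∀ x, 0 ≤ μ x) (hμ1 : ∑ z, μ z = 1) (u v : X → ℝ) :
    ∑ z, μ z * (if u z ≠ v z then (1:ℝ) else 0) ≤ 1 := by
  have : ∑ z, μ z * (if u z ≠ v z then (1:ℝ) else 0) ≤ ∑ z, μ z := by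
    apply Finset.sum_le_sum
    intro z _
    split_ifs <;> simp [hμ0 z]
  linarith [this, hμ1.le]

lemma dist_symm (μ : X → ℝ) (u v : X → ℝ) :
    ∑ z, μ z * (if u z ≠ v z then (1:ℝ) else 0)
      = ∑ z, μ z * (if v z ≠ u z then (1:ℝ) else 0) := by
  apply Finset.sum_congr rfl
  intro z _
  congr 1
  simp [ne_comm]

lemma dist_triangle' (μ : X → ℝ) (hμ0 : ∀ x, 0 ≤ μ x) (u v w : X → ℝ) :
    ∑ z, μ z * (if u z ≠ w z then (1:ℝ) else 0)
      ≤ (∑ z, μ z * (if u z ≠ v z then (1:ℝ) else 0))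
        + ∑ z, μ z * (if v z ≠ w z then (1:ℝ) else 0) := by
  rw [← Finset.sum_add_distrib]
  apply Finset.sum_le_sum
  intro z _
  rw [← mul_add]
  apply mul_le_mul_of_nonneg_left _ (hμ0 z)
  by_cases h1 : u z = v z <;> by_cases h2 : v z = w z
  · simp [h1, h2, h1.trans h2]
  · simp only [h1]; split_ifs <;> norm_num
  · simp only [← h2]; split_ifs <;> norm_num
  · split_ifs <;> norm_num

lemma acc_lower (μ : X → ℝ) (hμ0 : ∀ x, 0 ≤ μ x) (hμ1 : ∑ z, μ z = 1)
    {m : ℕ} (ε : ℝ) (hε : 0 < ε) (hmε : 20 ≤ (m : ℝ) * ε) (f h : X → ℝ)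
    (hp : ∑ z, μ z * (if f z ≠ h z then (1:ℝ) else 0) ≤ ε / 4) :
    (5:ℝ)/6 ≤ ∑ b : Fin m → X, (∏ k, μ (b k)) *
      (if (∑ j, if f (b j) ≠ h (b j) then (1:ℝ) else 0) ≤ m * (ε/2) then 1 else 0) := by
  classical
  have hp0 : 0 ≤ ∑ z, μ z * (if f z ≠ h z then (1:ℝ) else 0) := dist_nonneg' μ hμ0 f h
  have hp1 : ∑ z, μ z * (if f z ≠ h z then (1:ℝ) else 0) ≤ 1 := dist_le_one μ hμ0 hμ1 f h
  set θ : X → ℝ := fun z => if f z ≠ h z then (1:ℝ) else 0 with hθdef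
  set p : ℝ := ∑ z, μ z * θ z with hpdef
  have hθ : ∀ z, θ z = 0 ∨ θ z = 1 := by
    intro z; simp only [hθdef]; split_ifs <;> simp
  have hm0 : (0:ℝ) < m := by nlinarith
  have key := tail_bound μ hμ0 hμ1 (m := m) θ hθ (m * ε / 4) (by positivity)
    ?_ (fun b => ¬ ((∑ j, θ (b j)) ≤ (m:ℝ) * (ε/2))) 1 (Or.inl rfl) ?_
  · have hsum : ∀ b : Fin m → X,
        (∏ k, μ (b k)) * (if (∑ j, θ (b j)) ≤ (m:ℝ) * (ε/2) then (1:ℝ) else 0)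
        = (∏ k, μ (b k)) - (∏ k, μ (b k)) *
            (if ¬ ((∑ j, θ (b j)) ≤ (m:ℝ) * (ε/2)) then (1:ℝ) else 0) := by
      intro b; split_ifs <;> simp
    rw [Finset.sum_congr rfl fun b _ => hsum b, Finset.sum_sub_distrib,
      total_mass μ hμ1 m]
    linarith [key]
  · have h2 : (m:ℝ) * (p * (1 - p)) ≤ m * p := by
      nlinarith [mul_nonneg (mul_nonneg hm0.le hp0) hp0]
    have h3 : (m:ℝ) * p ≤ m * ε / 4 := by nlinarith
    have h4 : (m:ℝ) * ε / 4 ≤ (m * ε / 4) ^ 2 / 5 := by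
      nlinarith [mul_le_mul_of_nonneg_left hmε (mul_pos hm0 hε).le]
    rw [← hpdef]
    linarith
  · intro b hb
    push_neg at hb
    rw [one_mul, ← hpdef]
    nlinarith [hb.le]

lemma acc_upper (μ : X → ℝ) (hμ0 : ∀ x, 0 ≤ μ x) (hμ1 : ∑ z, μ z = 1)
    {m : ℕ} (ε : ℝ) (hε : 0 < ε) (hmε2 : 20 ≤ (m : ℝ) * ε ^ 2) (f h : X → ℝ)
    (hp : 3 * ε / 4 ≤ ∑ z, μ z * (if f z ≠ h z then (1:ℝ) else 0)) :
    (∑ b : Fin m → X, (∏ k, μ (b k)) *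
      (if (∑ j, if f (b j) ≠ h (b j) then (1:ℝ) else 0) ≤ m * (ε/2) then 1 else 0)) ≤ 1/6 := by
  classical
  have hp0 : 0 ≤ ∑ z, μ z * (if f z ≠ h z then (1:ℝ) else 0) := dist_nonneg' μ hμ0 f h
  have hp1 : ∑ z, μ z * (if f z ≠ h z then (1:ℝ) else 0) ≤ 1 := dist_le_one μ hμ0 hμ1 f h
  set θ : X → ℝ := fun z => if f z ≠ h z then (1:ℝ) else 0 with hθdef
  set p : ℝ := ∑ z, μ z * θ z with hpdef
  have hθ : ∀ z, θ z = 0 ∨ θ z = 1 := by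
    intro z; simp only [hθdef]; split_ifs <;> simp
  have hm0 : (0:ℝ) < m := by nlinarith
  have h5 : (m:ℝ) * (p * (1 - p)) ≤ (m * ε / 4) ^ 2 / 5 := by
    have h4 : p * (1 - p) ≤ 1/4 := by nlinarith [sq_nonneg (1 - 2*p)]
    nlinarith [mul_le_mul_of_nonneg_left hmε2 hm0.le,
      mul_le_mul_of_nonneg_left h4 hm0.le]
  exact tail_bound μ hμ0 hμ1 (m := m) θ hθ (m * ε / 4) (by positivity)
    (by rw [← hpdef]; exact h5) (fun b => (∑ j, θ (b j)) ≤ (m:ℝ) * (ε/2)) (-1) (Or.inr rfl)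
    (fun b hb => by rw [← hpdef]; nlinarith)

lemma acc_nonneg (μ : X → ℝ) (hμ0 : ∀ x, 0 ≤ μ x) {m : ℕ} (C : (Fin m → X) → Prop)
    [DecidablePred C] :
    0 ≤ ∑ b : Fin m → X, (∏ k, μ (b k)) * (if C b then (1:ℝ) else 0) := by
  apply Finset.sum_nonneg
  intro b _
  apply mul_nonneg (Finset.prod_nonneg fun k _ => hμ0 _)
  split_ifs <;> norm_num

end Helpers

theorem stmt6 {X : Type*} [Fintype X] [Nonempty X]
    (μ : X → ℝ) (hμ0 : ∀ x, 0 ≤ μ x) (hμ1 : ∑ x, μ x = 1)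
    (F : Set (X → ℝ)) (hFne : F.Nonempty) (hFval : ∀ f ∈ F, ∀ x, f x = 1 ∨ f x = -1)
    (ε : ℝ) (hε : 0 < ε) (hε1 : ε < 1)
    (s : ℕ) (L : (Fin s → X × ℝ) → (X → ℝ))
    (hL : ∀ f ∈ F,
      (5 : ℝ) / 6 ≤ ∑ x : Fin s → X, (∏ i, μ (x i)) *
        (if (∑ z, μ z * (if L (fun i => (x i, f (x i))) z ≠ f z then 1 else 0)) ≤ ε / 4
         then 1 else 0)) :
    ∃ T : (Fin (s + ⌈(20 : ℝ) / ε ^ 2⌉₊) → X × ℝ) → ℝ,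
      (∀ σ, 0 ≤ T σ ∧ T σ ≤ 1) ∧
      (∀ f ∈ F,
        (2 : ℝ) / 3 ≤ ∑ x : Fin (s + ⌈(20 : ℝ) / ε ^ 2⌉₊) → X,
          (∏ i, μ (x i)) * T (fun i => (x i, f (x i)))) ∧
      (∀ f : X → ℝ, (∀ x, f x = 1 ∨ f x = -1) →
        (∀ g ∈ F, ε ≤ ∑ z, μ z * (if f z ≠ g z then 1 else 0)) →
        (2 : ℝ) / 3 ≤ 1 - ∑ x : Fin (s + ⌈(20 : ℝ) / ε ^ 2⌉₊) → X,
          (∏ i, μ (x i)) * T (fun i => (x i, f (x i)))) := by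
  classical
  set m : ℕ := ⌈(20:ℝ)/ε^2⌉₊ with hmdef
  have hε2 : (0:ℝ) < ε ^ 2 := by positivity
  have hmR : 20 / ε ^ 2 ≤ (m:ℝ) := Nat.le_ceil _
  have hmε2 : 20 ≤ (m:ℝ) * ε ^ 2 := by
    rw [div_le_iff₀ hε2] at hmR
    linarith
  have hm0 : (0:ℝ) ≤ m := Nat.cast_nonneg m
  have hmε : 20 ≤ (m:ℝ) * ε := by nlinarith
  have hsplit : ∀ f : X → ℝ,
      (∑ x : Fin (s + m) → X, (∏ i, μ (x i)) *
        (if (∃ g ∈ F, (∑ z, μ z * (if L (fun i => (x (Fin.castAdd m i), f (x (Fin.castAdd m i)))) z ≠ g z then (1:ℝ) else 0)) ≤ ε/4) ∧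
            ((∑ j : Fin m, if f (x (Fin.natAdd s j)) ≠ L (fun i => (x (Fin.castAdd m i), f (x (Fin.castAdd m i)))) (x (Fin.natAdd s j)) then (1:ℝ) else 0) ≤ (m:ℝ) * (ε/2))
          then 1 else 0))
      = ∑ a : Fin s → X, (∏ i, μ (a i)) *
          ((if (∃ g ∈ F, (∑ z, μ z * (if L (fun i => (a i, f (a i))) z ≠ g z then (1:ℝ) else 0)) ≤ ε/4) then (1:ℝ) else 0) *
           ∑ b : Fin m → X, (∏ j, μ (b j)) *
             (if (∑ j, if f (b j) ≠ L (fun i => (a i, f (a i))) (b j) then (1:ℝ) else 0) ≤ (m:ℝ) * (ε/2) then 1 else 0)) := by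
    intro f
    let e : ((Fin s → X) × (Fin m → X)) ≃ (Fin (s+m) → X) :=
      (Equiv.sumArrowEquivProdArrow (Fin s) (Fin m) X).symm.trans
        (Equiv.arrowCongr finSumFinEquiv (Equiv.refl X))
    have hcast : ∀ (a : Fin s → X) (b : Fin m → X) (i : Fin s),
        e (a, b) (Fin.castAdd m i) = a i := by
      intro a b i
      simp [e, Equiv.sumArrowEquivProdArrow, Equiv.arrowCongr]
    have hnat : ∀ (a : Fin s → X) (b : Fin m → X) (j : Fin m),
        e (a, b) (Fin.natAdd s j) = b j := by
      intro a b j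
      simp [e, Equiv.sumArrowEquivProdArrow, Equiv.arrowCongr]
    have hprod : ∀ (a : Fin s → X) (b : Fin m → X),
        (∏ i, μ (e (a, b) i)) = (∏ i, μ (a i)) * ∏ j, μ (b j) := by
      intro a b
      have h2 : ∏ i, μ (e (a, b) i) = ∏ u : Fin s ⊕ Fin m, μ (e (a, b) (finSumFinEquiv u)) :=
        (Fintype.prod_equiv finSumFinEquiv _ _ fun u => rfl).symm
      rw [h2, Fintype.prod_sum_type]
      congr 1
      · exact Finset.prod_congr rfl fun i _ => by
          simp [e, Equiv.sumArrowEquivProdArrow, Equiv.arrowCongr]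
      · exact Finset.prod_congr rfl fun j _ => by
          simp [e, Equiv.sumArrowEquivProdArrow, Equiv.arrowCongr]
    rw [← Equiv.sum_comp e, Fintype.sum_prod_type]
    refine Finset.sum_congr rfl fun a _ => ?_
    have hG : ∀ b : Fin m → X,
        (∏ i, μ (e (a, b) i)) *
          (if (∃ g ∈ F, (∑ z, μ z * (if L (fun i => (e (a,b) (Fin.castAdd m i), f (e (a,b) (Fin.castAdd m i)))) z ≠ g z then (1:ℝ) else 0)) ≤ ε/4) ∧
              ((∑ j : Fin m, if f (e (a,b) (Fin.natAdd s j)) ≠ L (fun i => (e (a,b) (Fin.castAdd m i), f (e (a,b) (Fin.castAdd m i)))) (e (a,b) (Fin.natAdd s j)) then (1:ℝ) else 0) ≤ (m:ℝ) * (ε/2))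
            then 1 else 0)
        = ((∏ i, μ (a i)) * (if (∃ g ∈ F, (∑ z, μ z * (if L (fun i => (a i, f (a i))) z ≠ g z then (1:ℝ) else 0)) ≤ ε/4) then (1:ℝ) else 0)) *
          ((∏ j, μ (b j)) * (if (∑ j, if f (b j) ≠ L (fun i => (a i, f (a i))) (b j) then (1:ℝ) else 0) ≤ (m:ℝ) * (ε/2) then 1 else 0)) := by
      intro b
      simp only [hcast, hnat]
      rw [hprod a b]
      by_cases hP : (∃ g ∈ F, (∑ z, μ z * (if L (fun i => (a i, f (a i))) z ≠ g z then (1:ℝ) else 0)) ≤ ε/4)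
      · by_cases hQ : ((∑ j, if f (b j) ≠ L (fun i => (a i, f (a i))) (b j) then (1:ℝ) else 0) ≤ (m:ℝ) * (ε/2))
        · rw [if_pos ⟨hP, hQ⟩, if_pos hP, if_pos hQ]; ring
        · rw [if_neg (fun hc => hQ hc.2), if_pos hP, if_neg hQ]; ring
      · rw [if_neg (fun hc => hP hc.1), if_neg hP]; ring
    rw [Finset.sum_congr rfl fun b _ => hG b, ← Finset.mul_sum, mul_assoc]
  refine ⟨fun σ =>
    if (∃ g ∈ F, (∑ z, μ z *
          (if L (fun i => σ (Fin.castAdd m i)) z ≠ g z then (1:ℝ) else 0)) ≤ ε/4) ∧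
        ((∑ j : Fin m, if (σ (Fin.natAdd s j)).2 ≠
            L (fun i => σ (Fin.castAdd m i)) ((σ (Fin.natAdd s j)).1) then (1:ℝ) else 0)
          ≤ (m:ℝ) * (ε/2))
    then 1 else 0, fun σ => ?_, ?_, ?_⟩
  · constructor <;> (dsimp only; split_ifs <;> norm_num)
  · -- completeness
    intro f hf
    dsimp only
    rw [hsplit f]
    have step : ∀ a : Fin s → X,
        (5/6 : ℝ) * ((∏ i, μ (a i)) *
          (if (∑ z, μ z * (if L (fun i => (a i, f (a i))) z ≠ f z then (1:ℝ) else 0)) ≤ ε/4 then 1 else 0))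
        ≤ (∏ i, μ (a i)) *
          ((if (∃ g ∈ F, (∑ z, μ z * (if L (fun i => (a i, f (a i))) z ≠ g z then (1:ℝ) else 0)) ≤ ε/4) then (1:ℝ) else 0) *
           ∑ b : Fin m → X, (∏ j, μ (b j)) *
             (if (∑ j, if f (b j) ≠ L (fun i => (a i, f (a i))) (b j) then (1:ℝ) else 0) ≤ (m:ℝ) * (ε/2) then 1 else 0)) := by
      intro a
      have hWa : 0 ≤ ∏ i, μ (a i) := Finset.prod_nonneg fun i _ => hμ0 _
      by_cases hga : (∑ z, μ z * (if L (fun i => (a i, f (a i))) z ≠ f z then (1:ℝ) else 0)) ≤ ε/4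
      · rw [if_pos hga, if_pos ⟨f, hf, hga⟩, mul_one, one_mul]
        have hAcc := acc_lower μ hμ0 hμ1 ε hε hmε f (L (fun i => (a i, f (a i))))
          (by rw [dist_symm]; exact hga)
        nlinarith [mul_le_mul_of_nonneg_left hAcc hWa]
      · rw [if_neg hga, mul_zero, mul_zero]
        apply mul_nonneg hWa
        apply mul_nonneg (by split_ifs <;> norm_num)
        exact acc_nonneg μ hμ0 _
    calc (2:ℝ)/3 ≤ 5/6 * (5/6) := by norm_num
      _ ≤ 5/6 * ∑ a : Fin s → X, (∏ i, μ (a i)) *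
            (if (∑ z, μ z * (if L (fun i => (a i, f (a i))) z ≠ f z then (1:ℝ) else 0)) ≤ ε/4 then 1 else 0) :=
          mul_le_mul_of_nonneg_left (hL f hf) (by norm_num)
      _ = ∑ a : Fin s → X, (5/6 : ℝ) * ((∏ i, μ (a i)) *
            (if (∑ z, μ z * (if L (fun i => (a i, f (a i))) z ≠ f z then (1:ℝ) else 0)) ≤ ε/4 then 1 else 0)) :=
          Finset.mul_sum _ _ _
      _ ≤ _ := Finset.sum_le_sum fun a _ => step a
  · -- soundness
    intro f hfval hfar
    dsimp only
    rw [hsplit f]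
    have step : ∀ a : Fin s → X,
        (∏ i, μ (a i)) *
          ((if (∃ g ∈ F, (∑ z, μ z * (if L (fun i => (a i, f (a i))) z ≠ g z then (1:ℝ) else 0)) ≤ ε/4) then (1:ℝ) else 0) *
           ∑ b : Fin m → X, (∏ j, μ (b j)) *
             (if (∑ j, if f (b j) ≠ L (fun i => (a i, f (a i))) (b j) then (1:ℝ) else 0) ≤ (m:ℝ) * (ε/2) then 1 else 0))
        ≤ (∏ i, μ (a i)) * (1/6) := by
      intro a
      have hWa : 0 ≤ ∏ i, μ (a i) := Finset.prod_nonneg fun i _ => hμ0 _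
      apply mul_le_mul_of_nonneg_left _ hWa
      by_cases hP : ∃ g ∈ F, (∑ z, μ z * (if L (fun i => (a i, f (a i))) z ≠ g z then (1:ℝ) else 0)) ≤ ε/4
      · rw [if_pos hP, one_mul]
        obtain ⟨g, hgF, hgd⟩ := hP
        have hfar' := hfar g hgF
        have htri := dist_triangle' μ hμ0 f (L (fun i => (a i, f (a i)))) g
        have hp : 3 * ε / 4 ≤ ∑ z, μ z * (if f z ≠ L (fun i => (a i, f (a i))) z then (1:ℝ) else 0) := by
          linarith
        exact acc_upper μ hμ0 hμ1 ε hε hmε2 f (L (fun i => (a i, f (a i)))) hp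
      · rw [if_neg hP, zero_mul]
        norm_num
    have hub : (∑ a : Fin s → X, (∏ i, μ (a i)) *
          ((if (∃ g ∈ F, (∑ z, μ z * (if L (fun i => (a i, f (a i))) z ≠ g z then (1:ℝ) else 0)) ≤ ε/4) then (1:ℝ) else 0) *
           ∑ b : Fin m → X, (∏ j, μ (b j)) *
             (if (∑ j, if f (b j) ≠ L (fun i => (a i, f (a i))) (b j) then (1:ℝ) else 0) ≤ (m:ℝ) * (ε/2) then 1 else 0)))
        ≤ 1/6 := by
      calc _ ≤ ∑ a : Fin s → X, (∏ i, μ (a i)) * (1/6 : ℝ) := Finset.sum_le_sum fun a _ => step a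
        _ = 1/6 := by rw [← Finset.sum_mul, total_mass μ hμ1 s, one_mul]
    linarith
end

section
/- Let (X,⪯) be a finite partially ordered set, f : X → ℝ, k ≥ 1 an integer, and k' ≥ 3k an integer. Let C be a finite collection of k'-alternating chains for f that are pairwise disjoint as subsets of X. Then for every k-monotone function g : X → ℝ, d(f,g) ≥ |⋃_{C∈C} C| / (3·|X|). -/
open Finset

/-!
Removing one point from an alternating chain and at most one of its neighbours leaves an
alternating chain, so a chain of length `m` for `f` contains an alternating chain for `g` of
length at least `m - 2 * #{x | f x ≠ g x}`. If `g` is `k`-monotone this gives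
`m ≤ k + 2 * #{x | f x ≠ g x}`, hence at least a third of the points of every chain of length
`m ≥ 3 * k` are changed by `g`; summing over disjoint chains gives the bound.
-/

section

variable {X : Type*} [Preorder X]

/-- The list form of `AltChain`: passing `-g` to the tail makes every step a descent of the
current function. -/
def Zigzag : (X → ℝ) → List X → Prop
  | _, [] => True
  | g, x :: l => (∀ y ∈ l.head?, x < y ∧ g y < g x) ∧ Zigzag (-g) l

namespace Zigzag

variable {g : X → ℝ} {l : List X} {x : X}

theorem isChain (hl : Zigzag g l) : l.IsChain (· < ·) := by
  induction l generalizing g with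
  | nil => exact .nil
  | cons x l ih =>
    rcases l with _ | ⟨y, l⟩
    · exact .singleton x
    · exact List.isChain_cons_cons.2 ⟨(hl.1 y rfl).1, ih hl.2⟩

theorem pairwise (hl : Zigzag g l) : l.Pairwise (· < ·) :=
  hl.isChain.pairwise

theorem congr {f : X → ℝ} (hl : Zigzag f l) (hfg : ∀ y ∈ l, f y = g y) : Zigzag g l := by
  induction l generalizing f g with
  | nil => trivial
  | cons x l ih =>
    refine ⟨fun y hy => ?_, ih hl.2 fun z hz => by simp [hfg z (List.mem_cons_of_mem x hz)]⟩
    rw [← hfg x List.mem_cons_self, ← hfg y (List.mem_cons_of_mem x (List.mem_of_mem_head? hy))]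
    exact hl.1 y hy

theorem exists_sublist_of_mem_second {a : X} {t : List X} (hl : Zigzag g (a :: x :: t)) :
    ∃ l', l'.Sublist (a :: x :: t) ∧ x ∉ l' ∧ Zigzag g l' ∧ t.length ≤ l'.length ∧
      ∀ b ∈ l'.head?, g a ≤ g b := by
  have hpw := hl.pairwise
  obtain ⟨hax, -⟩ := hl.1 x rfl
  rcases t with _ | ⟨d, t⟩
  · exact ⟨[a], by simp, by simpa using hax.ne', ⟨by simp, trivial⟩, by simp, by simp⟩
  have hx : x ∉ d :: t := fun h =>
    ((List.pairwise_cons.1 (List.pairwise_cons.1 hpw).2).1 x h).false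
  have hd : Zigzag g (d :: t) := by simpa only [neg_neg] using hl.2.2
  -- drop `x` together with whichever of `a`, `d` keeps the chain alternating
  by_cases hda : g d ≤ g a
  · refine ⟨a :: t, by simp, by simp_all [hax.ne'], ⟨fun e he => ⟨?_, ?_⟩, hd.2⟩, by simp, by simp⟩
    · exact (List.pairwise_cons.1 hpw).1 e (by simp [List.mem_of_mem_head? he])
    · exact (hd.1 e he).2.trans_le hda
  · exact ⟨d :: t, by simp, hx, hd, by simp, by simpa using (not_le.1 hda).le⟩

/-- The last conjunct says the new head is no lower than the old one, so that an element which
could precede `l` in a zigzag can still precede `l'`. -/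
theorem exists_sublist_of_mem (hl : Zigzag g l) (hx : x ∈ l) :
    ∃ l', l'.Sublist l ∧ x ∉ l' ∧ Zigzag g l' ∧ l.length ≤ l'.length + 2 ∧
      (l.head? ≠ some x → ∀ a ∈ l.head?, ∀ b ∈ l'.head?, g a ≤ g b) := by
  induction l generalizing g with
  | nil => simp at hx
  | cons a t ih =>
    have hpw := hl.pairwise
    rcases List.mem_cons.1 hx with rfl | hxt
    · refine ⟨t.tail, (List.tail_sublist t).cons _, fun h => ?_, ?_,
        by simp only [List.length_cons, List.length_tail]; omega, by simp⟩
      · exact ((List.pairwise_cons.1 hpw).1 x (List.mem_of_mem_tail h)).false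
      · rcases t with _ | ⟨c, t⟩
        · trivial
        · simpa only [neg_neg, List.tail_cons] using hl.2.2
    rcases t with _ | ⟨c, t⟩
    · simp at hxt
    have hax : a < x := (List.pairwise_cons.1 hpw).1 x hxt
    rcases List.mem_cons.1 hxt with rfl | hxt
    · obtain ⟨l', hsub, hx', hl', hlen, hhead⟩ := hl.exists_sublist_of_mem_second
      exact ⟨l', hsub, hx', hl', by simpa using hlen, fun _ a' ha' => by simp_all⟩
    obtain ⟨l₂, hsub, hx₂, hl₂, hlen, hhead⟩ := ih hl.2 (List.mem_cons_of_mem c hxt)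
    have hcx : c < x := (List.pairwise_cons.1 hl.2.pairwise).1 x hxt
    refine ⟨a :: l₂, hsub.cons_cons a, by simp [hax.ne', hx₂], ⟨fun b hb => ⟨?_, ?_⟩, hl₂⟩,
      by simpa using hlen, by simp⟩
    · exact (List.pairwise_cons.1 hpw).1 b (hsub.subset (List.mem_of_mem_head? hb))
    · have hbc : g b ≤ g c := by simpa using hhead (by simp [hcx.ne]) c rfl b hb
      exact hbc.trans_lt (hl.1 c rfl).2

theorem exists_zigzag_sublist {f : X → ℝ} {l : List X} (hl : Zigzag f l) (g : X → ℝ) :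
    ∃ l', l'.Sublist l ∧ Zigzag g l' ∧
      l.length ≤ l'.length + 2 * l.countP (fun y => f y ≠ g y) := by
  by_cases h : ∀ y ∈ l, f y = g y
  · exact ⟨l, .refl l, hl.congr h, by omega⟩
  push Not at h
  obtain ⟨x, hxl, hx⟩ := h
  obtain ⟨l₁, hsub, hx₁, hl₁, hlen, -⟩ := hl.exists_sublist_of_mem hxl
  have hcount : l₁.countP (fun y => f y ≠ g y) < l.countP (fun y => f y ≠ g y) := by
    classical
    have h₁ := (List.erase_of_not_mem hx₁ ▸ hsub.erase x).countP_le (p := fun y => f y ≠ g y)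
    have h₂ := List.countP_pos_iff (p := fun y => f y ≠ g y) |>.2 ⟨x, hxl, by simp [hx]⟩
    rw [List.countP_erase, if_pos ⟨hxl, by simp [hx]⟩] at h₁
    omega
  obtain ⟨l', hsub', hl', hlen'⟩ := exists_zigzag_sublist hl₁ g
  exact ⟨l', hsub'.trans hsub, hl', by omega⟩
termination_by l.countP (fun y => f y ≠ g y)
decreasing_by simpa using hcount

end Zigzag

theorem altChain_of_le_one {f : X → ℝ} {m : ℕ} (hm : m ≤ 1) (c : Fin m → X) : AltChain f c := by
  have : Subsingleton (Fin m) := Fin.subsingleton_iff_le_one.2 hm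
  exact ⟨Subsingleton.strictMono c, fun i h => absurd h (by omega)⟩

theorem altChain_succ_succ_iff {f : X → ℝ} {m : ℕ} {c : Fin (m + 2) → X} :
    AltChain f c ↔ (c 0 < c 1 ∧ f (c 1) < f (c 0)) ∧ AltChain (-f) (Fin.tail c) := by
  unfold AltChain
  rw [Fin.strictMono_iff_lt_succ, Fin.strictMono_iff_lt_succ, Fin.forall_fin_succ,
    Fin.forall_fin_succ]
  simp only [Fin.castSucc_zero, Fin.succ_zero_eq_one, Fin.castSucc_succ, Fin.coe_ofNat_eq_mod,
    Nat.zero_mod, zero_add, lt_add_iff_pos_left, Order.lt_add_one_iff, zero_le, Even.zero,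
    Fin.mk_one, forall_const, Nat.not_odd_zero, IsEmpty.forall_iff, and_true, Fin.val_succ,
    add_lt_add_iff_right, Nat.even_add_one, Nat.not_even_iff_odd, Nat.odd_add_one,
    Nat.not_odd_iff_even, Fin.tail, Fin.succ_mk, Pi.neg_apply, neg_lt_neg_iff]
  exact ⟨fun ⟨⟨h₁, h₂⟩, h₃, h₄⟩ => ⟨⟨h₁, h₃⟩, h₂, fun i h => (h₄ i h).symm⟩,
    fun ⟨⟨h₁, h₃⟩, h₂, h₄⟩ => ⟨⟨h₁, h₂⟩, h₃, fun i h => (h₄ i h).symm⟩⟩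

theorem zigzag_ofFn_iff {f : X → ℝ} {m : ℕ} {c : Fin m → X} :
    Zigzag f (List.ofFn c) ↔ AltChain f c := by
  induction m generalizing f with
  | zero => simp [Zigzag, altChain_of_le_one]
  | succ m ih =>
    rcases m with _ | m
    · simp [Zigzag, altChain_of_le_one]
    · rw [altChain_succ_succ_iff, ← ih, List.ofFn_succ, List.ofFn_succ]
      simp [Zigzag, Fin.tail]

theorem AltChain.comp_castLE {f : X → ℝ} {m n : ℕ} {c : Fin n → X} (hc : AltChain f c)
    (h : m ≤ n) : AltChain f (c ∘ Fin.castLE h) :=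
  ⟨hc.1.comp (Fin.strictMono_castLE h), fun i hi => hc.2 (Fin.castLE h i) (by simp; omega)⟩

theorem KMonotone.length_le_of_zigzag {k : ℕ} {g : X → ℝ} {l : List X} (hg : KMonotone k g)
    (hl : Zigzag g l) : l.length ≤ k := by
  by_contra! h
  have hc : AltChain g l.get := zigzag_ofFn_iff.1 (by rwa [List.ofFn_get])
  exact hg ⟨l.get ∘ Fin.castLE h, hc.comp_castLE h⟩

theorem Zigzag.length_le_add_two_mul_countP {k : ℕ} {f g : X → ℝ} {l : List X}
    (hl : Zigzag f l) (hg : KMonotone k g) :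
    l.length ≤ k + 2 * l.countP (fun y => f y ≠ g y) := by
  obtain ⟨l', -, hl', hlen⟩ := hl.exists_zigzag_sublist g
  have := hg.length_le_of_zigzag hl'
  omega

theorem Zigzag.card_toFinset_le [DecidableEq X] {k : ℕ} {f g : X → ℝ} {l : List X}
    (hl : Zigzag f l) (hg : KMonotone k g) (hk : 3 * k ≤ l.length) :
    l.toFinset.card ≤ 3 * (l.toFinset.filter fun y => f y ≠ g y).card := by
  have hnd := hl.pairwise.nodup
  have := hl.length_le_add_two_mul_countP hg
  have hfilter :
      l.toFinset.filter (fun y => f y ≠ g y) = (l.filter fun y => f y ≠ g y).toFinset := by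
    ext; simp
  rw [hfilter, List.toFinset_card_of_nodup hnd, List.toFinset_card_of_nodup (hnd.filter _),
    ← List.countP_eq_length_filter]
  omega

end

theorem Finset.card_biUnion_le_mul_card_filter {ι α : Type*} [DecidableEq α] {I : Finset ι}
    {s : ι → Finset α} (hs : (I : Set ι).PairwiseDisjoint s) (p : α → Prop) [DecidablePred p]
    {n : ℕ} (h : ∀ i ∈ I, (s i).card ≤ n * ((s i).filter p).card) :
    (I.biUnion s).card ≤ n * ((I.biUnion s).filter p).card := by
  rw [filter_biUnion, card_biUnion hs, card_biUnion (hs.mono fun i => filter_subset p (s i)),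
    mul_sum]
  exact sum_le_sum h

theorem stmt7_general {X : Type*} [PartialOrder X] [Fintype X] [DecidableEq X]
    (f : X → ℝ) (k k' : ℕ) (hk' : 3 * k ≤ k')
    (𝒞 : Finset (Fin k' → X))
    (hchain : ∀ c ∈ 𝒞, AltChain f c)
    (hdisj : ∀ c ∈ 𝒞, ∀ c' ∈ 𝒞, c ≠ c' → ∀ i j, c i ≠ c' j)
    (g : X → ℝ) (hg : KMonotone k g) :
    ((𝒞.biUnion fun c => Finset.image c Finset.univ).card : ℝ) / (3 * Fintype.card X) ≤
      ((Finset.univ.filter fun x => f x ≠ g x).card : ℝ) / Fintype.card X := by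
  have himage (c : Fin k' → X) : image c univ = (List.ofFn c).toFinset := by
    ext; simp
  have hdisj' : (𝒞 : Set (Fin k' → X)).PairwiseDisjoint fun c => image c univ := by
    intro c hc c' hc' hne
    simp only [Function.onFun, disjoint_left, mem_image, mem_univ, true_and]
    rintro _ ⟨i, rfl⟩ ⟨j, hj⟩
    exact hdisj c hc c' hc' hne i j hj.symm
  have hcard : (𝒞.biUnion fun c => image c univ).card ≤
      3 * (univ.filter fun x => f x ≠ g x).card := by
    refine (card_biUnion_le_mul_card_filter hdisj' _ fun c hc => ?_).trans
      (Nat.mul_le_mul_left 3 (card_le_card (filter_subset_filter _ (subset_univ _))))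
    rw [himage]
    exact (zigzag_ofFn_iff.2 (hchain c hc)).card_toFinset_le hg (by simpa using hk')
  rw [← div_div]
  refine div_le_div_of_nonneg_right ((div_le_iff₀ three_pos).2 ?_) (Nat.cast_nonneg _)
  exact_mod_cast hcard.trans_eq (mul_comm _ _)

theorem stmt7 {X : Type*} [PartialOrder X] [Fintype X] [DecidableEq X]
    (f : X → ℝ) (k k' : ℕ) (hk : 1 ≤ k) (hk' : 3 * k ≤ k')
    (𝒞 : Finset (Fin k' → X))
    (hchain : ∀ c ∈ 𝒞, AltChain f c)
    (hdisj : ∀ c ∈ 𝒞, ∀ c' ∈ 𝒞, c ≠ c' → ∀ i j, c i ≠ c' j)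
    (g : X → ℝ) (hg : KMonotone k g) :
    ((𝒞.biUnion fun c => Finset.image c Finset.univ).card : ℝ) / (3 * Fintype.card X) ≤
      ((Finset.univ.filter fun x => f x ≠ g x).card : ℝ) / Fintype.card X :=
  stmt7_general f k k' hk' 𝒞 hchain hdisj g hg
end

section
/- Let d be an even positive integer and let m be an integer with 1 ≤ m ≤ d/2 + 1. Then there exists a collection of at least (1/2)·binom(d, d/2 + m − 1) pairwise vertex-disjoint chains in {0,1}^d, each chain consisting of m points x_1 ≺ x_2 ≺ ⋯ ≺ x_m with Hamming weights |x_ℓ| = d/2 + ℓ − 1 for ℓ = 1,…,m (so consecutive points of each chain differ in exactly one coordinate); pairwise vertex-disjoint means no point of {0,1}^d lies on two of the chains. -/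
open Finset

/-- Hamming weight. -/
def wt {d : ℕ} (x : Cube d) : ℕ := (Finset.univ.filter fun i => x i = true).card

/-!
Read `x ∈ {0,1}^d` as a walk with steps `+1` (for a one) and `-1` (for a zero); its height after
`j` steps is `Cube.balance x j`. If `x` has more ones than zeros, its final height is positive, so
the last position where the walk attains its minimum is followed by a `+1` step; turning that one
into a zero lowers `x` by one level, and the lowered walk attains its (new) minimum first right
after that position, so the flipped coordinate can be recovered. This gives an injective map from
every level above `d / 2` to the level below, always going down in the order; iterating it
`m - 1` times from each point of level `d / 2 + m - 1` yields `binom(d, d / 2 + m - 1)` pairwise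
disjoint chains.
-/

section LoweringChains

variable {α : Type*} {r : α → ℕ} {t : ℕ} {D : α → α}

theorem rank_iterate (hrank : ∀ x, t < r x → r (D x) + 1 = r x) :
    ∀ {k : ℕ} {x : α}, t + k ≤ r x → r (D^[k] x) + k = r x
  | 0, _, _ => rfl
  | k + 1, x, hx => by
    have hDx := hrank x (by omega)
    have := rank_iterate hrank (k := k) (x := D x) (by omega)
    rw [Function.iterate_succ_apply]
    omega

theorem iterate_lt [PartialOrder α] (hrank : ∀ x, t < r x → r (D x) + 1 = r x)
    (hlt : ∀ x, t < r x → D x < x) :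
    ∀ {k : ℕ} {x : α}, 0 < k → t + k ≤ r x → D^[k] x < x
  | 0, _, hk, _ => absurd hk (lt_irrefl 0)
  | 1, x, _, hx => hlt x (by omega)
  | k + 2, x, _, hx => by
    have hDx := hrank x (by omega)
    rw [Function.iterate_succ_apply]
    exact (iterate_lt hrank hlt (k := k + 1) k.succ_pos (by omega)).trans (hlt x (by omega))

theorem injOn_iterate (hrank : ∀ x, t < r x → r (D x) + 1 = r x)
    (hinj : Set.InjOn D {x | t < r x}) :
    ∀ k : ℕ, Set.InjOn D^[k] {x | t + k ≤ r x}
  | 0 => Set.injOn_id _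
  | k + 1 => fun x (hx : t + (k + 1) ≤ r x) y (hy : t + (k + 1) ≤ r y) hxy => by
    have hDx := hrank x (by omega)
    have hDy := hrank y (by omega)
    rw [Function.iterate_succ_apply, Function.iterate_succ_apply] at hxy
    exact hinj (show t < r x by omega) (show t < r y by omega)
      (injOn_iterate hrank hinj k (show t + k ≤ r (D x) by omega)
        (show t + k ≤ r (D y) by omega) hxy)

def chainBelow (D : α → α) (m : ℕ) (x : α) : Fin m → α := fun ℓ => D^[m - 1 - ℓ] x

theorem chainBelow_last {m : ℕ} (x : α) (hm : 1 ≤ m) :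
    chainBelow D m x ⟨m - 1, by omega⟩ = x := by
  simp [chainBelow]

theorem rank_chainBelow (hrank : ∀ x, t < r x → r (D x) + 1 = r x) {m : ℕ} {x : α}
    (hx : r x + 1 = t + m) (ℓ : Fin m) : r (chainBelow D m x ℓ) = t + ℓ := by
  have := rank_iterate hrank (k := m - 1 - ℓ) (x := x) (by omega)
  simp only [chainBelow]
  omega

theorem strictMono_chainBelow [PartialOrder α] (hrank : ∀ x, t < r x → r (D x) + 1 = r x)
    (hlt : ∀ x, t < r x → D x < x) {m : ℕ} {x : α} (hx : r x + 1 = t + m) :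
    StrictMono (chainBelow D m x) := by
  intro i j (hij : (i : ℕ) < j)
  have hsplit : chainBelow D m x i = D^[j - i] (chainBelow D m x j) := by
    rw [chainBelow, chainBelow, ← Function.iterate_add_apply]
    congr 1
    omega
  rw [hsplit]
  exact iterate_lt hrank hlt (by omega) (by rw [rank_chainBelow hrank hx]; omega)

theorem exists_disjoint_chains_of_lowering [PartialOrder α] [DecidableEq α]
    (hrank : ∀ x, t < r x → r (D x) + 1 = r x) (hlt : ∀ x, t < r x → D x < x)
    (hinj : Set.InjOn D {x | t < r x}) {m : ℕ} (hm : 1 ≤ m) (T : Finset α)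
    (hT : ∀ x ∈ T, r x + 1 = t + m) :
    ∃ 𝒞 : Finset (Fin m → α), 𝒞.card = T.card ∧
      (∀ c ∈ 𝒞, StrictMono c ∧ ∀ ℓ : Fin m, r (c ℓ) = t + ℓ) ∧
      (∀ c ∈ 𝒞, ∀ c' ∈ 𝒞, c ≠ c' → ∀ i j, c i ≠ c' j) := by
  refine ⟨T.image (chainBelow D m), card_image_of_injOn fun x _ y _ hxy => ?_, ?_, ?_⟩
  · simpa only [chainBelow_last _ hm] using congrFun hxy ⟨m - 1, by omega⟩
  · simp only [mem_image, forall_exists_index, and_imp]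
    rintro _ x hx rfl
    exact ⟨strictMono_chainBelow hrank hlt (hT x hx), rank_chainBelow hrank (hT x hx)⟩
  · simp only [mem_image, forall_exists_index, and_imp]
    rintro _ x hx rfl _ y hy rfl hne i j hij
    have hij' : i = j := Fin.ext <| by
      have := congrArg r hij
      rw [rank_chainBelow hrank (hT x hx), rank_chainBelow hrank (hT y hy)] at this
      omega
    subst hij'
    have hxT := hT x hx
    have hyT := hT y hy
    refine hne (congrArg _ (injOn_iterate hrank hinj (m - 1 - i) ?_ ?_ hij))
    · show t + (m - 1 - i) ≤ r x; omega
    · show t + (m - 1 - i) ≤ r y; omega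

end LoweringChains

namespace Cube

variable {d : ℕ}

def balance (x : Cube d) (j : ℕ) : ℤ :=
  ∑ i ∈ univ.filter (fun i : Fin d => (i : ℕ) < j), if x i then 1 else -1

theorem balance_zero (x : Cube d) : balance x 0 = 0 := by simp [balance]

theorem balance_succ (x : Cube d) (i : Fin d) :
    balance x (i + 1) = balance x i + if x i then 1 else -1 := by
  have h : univ.filter (fun j : Fin d => (j : ℕ) < i + 1)
      = insert i (univ.filter fun j : Fin d => (j : ℕ) < i) := by
    ext j
    simp only [mem_insert, mem_filter, mem_univ, true_and, Fin.ext_iff]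
    omega
  rw [balance, h, sum_insert (by simp), add_comm, balance]

theorem balance_length (x : Cube d) : balance x d = 2 * wt x - d := by
  have hsign : ∀ i : Fin d, (if x i then (1 : ℤ) else -1) = 2 * (if x i then 1 else 0) - 1 := by
    intro i; cases x i <;> rfl
  simp only [balance, Fin.is_lt, filter_true, sum_congr rfl fun i _ => hsign i,
    sum_sub_distrib, ← mul_sum, sum_boole, wt, sum_const, card_univ, Fintype.card_fin]
  simp

abbrev IsBalanceMin (x : Cube d) (j : ℕ) : Prop := ∀ k ≤ d, balance x j ≤ balance x k

theorem exists_isBalanceMin (x : Cube d) : ∃ j, j ≤ d ∧ IsBalanceMin x j := by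
  obtain ⟨j, hj, hmin⟩ := exists_min_image (range (d + 1)) (balance x) nonempty_range_add_one
  exact ⟨j, by simpa [Nat.lt_succ_iff] using hj,
    fun k hk => hmin k (by simpa [Nat.lt_succ_iff])⟩

def lastBalanceMin (x : Cube d) : ℕ := Nat.findGreatest (IsBalanceMin x) d

def firstBalanceMin (x : Cube d) : ℕ := Nat.find (exists_isBalanceMin x)

def lower (x : Cube d) : Cube d := fun i => x i && (i : ℕ) ≠ lastBalanceMin x

variable {x : Cube d}

theorem isBalanceMin_lastBalanceMin (x : Cube d) : IsBalanceMin x (lastBalanceMin x) := by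
  obtain ⟨j, hj, hmin⟩ := exists_isBalanceMin x
  exact Nat.findGreatest_spec hj hmin

theorem balance_lastBalanceMin_lt {j : ℕ} (hj : j ≤ d) (h : lastBalanceMin x < j) :
    balance x (lastBalanceMin x) < balance x j := by
  have hnot := Nat.findGreatest_is_greatest h hj
  simp only [IsBalanceMin, not_forall, not_le] at hnot
  obtain ⟨k, hk, hlt⟩ := hnot
  exact (isBalanceMin_lastBalanceMin x k hk).trans_lt hlt

theorem lastBalanceMin_lt (hx : 0 < balance x d) : lastBalanceMin x < d := by
  refine (show lastBalanceMin x ≤ d from Nat.findGreatest_le d).lt_of_ne fun h => ?_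
  have := isBalanceMin_lastBalanceMin x 0 (Nat.zero_le d)
  rw [h, balance_zero] at this
  omega

theorem apply_lastBalanceMin (hx : 0 < balance x d) :
    x ⟨lastBalanceMin x, lastBalanceMin_lt hx⟩ = true := by
  have hstep := balance_succ x ⟨lastBalanceMin x, lastBalanceMin_lt hx⟩
  have hlt := balance_lastBalanceMin_lt (j := lastBalanceMin x + 1) (lastBalanceMin_lt hx)
    (Nat.lt_add_one _)
  cases hxp : x ⟨lastBalanceMin x, lastBalanceMin_lt hx⟩
  · simp only [hxp, Bool.false_eq_true, if_false] at hstep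
    omega
  · rfl

theorem balance_lastBalanceMin_add_one (hx : 0 < balance x d) :
    balance x (lastBalanceMin x + 1) = balance x (lastBalanceMin x) + 1 := by
  have := balance_succ x ⟨lastBalanceMin x, lastBalanceMin_lt hx⟩
  rwa [apply_lastBalanceMin hx, if_pos rfl] at this

theorem balance_lower (hx : 0 < balance x d) (j : ℕ) :
    balance (lower x) j = balance x j - if lastBalanceMin x < j then 2 else 0 := by
  set p : Fin d := ⟨lastBalanceMin x, lastBalanceMin_lt hx⟩
  have hsign : ∀ i : Fin d, (if lower x i then (1 : ℤ) else -1)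
      = (if x i then 1 else -1) - if p = i then 2 else 0 := by
    intro i
    by_cases hi : p = i
    · subst hi
      simp [lower, p, apply_lastBalanceMin hx]
    · have : (i : ℕ) ≠ lastBalanceMin x := fun h => hi (Fin.ext h.symm)
      simp [lower, this, hi]
  simp only [balance, sum_congr rfl fun i _ => hsign i, sum_sub_distrib, sum_ite_eq, mem_filter,
    mem_univ, true_and, p]

theorem wt_lower (hx : 0 < balance x d) : wt (lower x) + 1 = wt x := by
  have h := balance_lower hx d
  rw [if_pos (lastBalanceMin_lt hx), balance_length, balance_length] at h
  omega

theorem lower_lt (hx : 0 < balance x d) : lower x < x := by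
  refine lt_of_le_of_ne (fun i => Bool.and_le_left _ _) fun h => ?_
  have := congrFun h ⟨lastBalanceMin x, lastBalanceMin_lt hx⟩
  simp [lower, apply_lastBalanceMin hx] at this

theorem firstBalanceMin_lower (hx : 0 < balance x d) :
    firstBalanceMin (lower x) = lastBalanceMin x + 1 := by
  have hp := lastBalanceMin_lt hx
  have hmin := isBalanceMin_lastBalanceMin x
  have hnew : balance (lower x) (lastBalanceMin x + 1) = balance x (lastBalanceMin x) - 1 := by
    rw [balance_lower hx, if_pos (Nat.lt_add_one _), balance_lastBalanceMin_add_one hx]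
    ring
  have hold : ∀ k ≤ lastBalanceMin x, balance (lower x) k = balance x k := fun k hk => by
    rw [balance_lower hx, if_neg (by omega), sub_zero]
  rw [firstBalanceMin, Nat.find_eq_iff]
  refine ⟨⟨hp, fun k hk => ?_⟩, fun n hn ⟨hnd, hnmin⟩ => ?_⟩
  · rw [hnew]
    by_cases hpk : lastBalanceMin x < k
    · have := balance_lastBalanceMin_lt hk hpk
      rw [balance_lower hx, if_pos hpk]
      omega
    · have := hmin k hk
      rw [hold k (by omega)]
      omega
  · have hle := hnmin _ hp
    rw [hnew, hold n (by omega)] at hle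
    have := hmin n hnd
    omega

theorem lower_or_eq_firstBalanceMin (hx : 0 < balance x d) (i : Fin d) :
    (lower x i || (i : ℕ) + 1 = firstBalanceMin (lower x)) = x i := by
  rw [firstBalanceMin_lower hx]
  by_cases hi : (i : ℕ) = lastBalanceMin x
  · have : i = ⟨lastBalanceMin x, lastBalanceMin_lt hx⟩ := Fin.ext hi
    simp [this, apply_lastBalanceMin hx]
  · simp [lower, hi]

theorem injOn_lower : Set.InjOn lower {x : Cube d | 0 < balance x d} :=
  fun x hx y hy hxy => funext fun i => by
    rw [← lower_or_eq_firstBalanceMin hx, ← lower_or_eq_firstBalanceMin hy, hxy]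

theorem card_filter_wt_eq (d k : ℕ) :
    (univ.filter fun x : Cube d => wt x = k).card = d.choose k := by
  rw [show d.choose k = (powersetCard k (univ : Finset (Fin d))).card by simp]
  refine card_bij' (fun x _ => univ.filter fun i => x i = true) (fun s _ i => decide (i ∈ s))
    ?_ ?_ ?_ ?_
  · intro x hx
    simpa [mem_powersetCard, wt] using (mem_filter.1 hx).2
  · intro s hs
    refine mem_filter.2 ⟨mem_univ _, ?_⟩
    simpa [wt] using (mem_powersetCard.1 hs).2
  · intro x _
    funext i
    simp
  · intro s _
    ext i
    simp

end Cube

theorem stmt19_general (d m : ℕ) (hm : 1 ≤ m) :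
    ∃ 𝒞 : Finset (Fin m → Cube d),
      Nat.choose d (d / 2 + m - 1) ≤ 2 * 𝒞.card ∧
      (∀ c ∈ 𝒞, StrictMono c ∧ ∀ ℓ : Fin m, wt (c ℓ) = d / 2 + (ℓ : ℕ)) ∧
      (∀ c ∈ 𝒞, ∀ c' ∈ 𝒞, c ≠ c' → ∀ i j, c i ≠ c' j) := by
  have hpos : ∀ x : Cube d, d / 2 < wt x → 0 < Cube.balance x d := fun x hx => by
    rw [Cube.balance_length]
    omega
  obtain ⟨𝒞, hcard, hchains, hdisjoint⟩ := exists_disjoint_chains_of_lowering (r := wt)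
    (fun x hx => Cube.wt_lower (hpos x hx)) (fun x hx => Cube.lower_lt (hpos x hx))
    (Cube.injOn_lower.mono hpos) hm (univ.filter fun x : Cube d => wt x = d / 2 + m - 1)
    (fun x hx => by rw [(mem_filter.1 hx).2]; omega)
  refine ⟨𝒞, ?_, hchains, hdisjoint⟩
  rw [hcard, Cube.card_filter_wt_eq]
  omega

theorem stmt19 (d m : ℕ) (hd : 0 < d) (hdeven : Even d) (hm : 1 ≤ m)
    (hm2 : m ≤ d / 2 + 1) :
    ∃ 𝒞 : Finset (Fin m → Cube d),
      Nat.choose d (d / 2 + m - 1) ≤ 2 * 𝒞.card ∧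
      (∀ c ∈ 𝒞, StrictMono c ∧ ∀ ℓ : Fin m, wt (c ℓ) = d / 2 + (ℓ : ℕ)) ∧
      (∀ c ∈ 𝒞, ∀ c' ∈ 𝒞, c ≠ c' → ∀ i j, c i ≠ c' j) :=
  stmt19_general d m hm
end
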